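/- Let W_p > 0 and W_n > 0 be real numbers, and set v* = W_p/(W_p + W_n). Then the function g : ℝ → ℝ given by g(v) = W_p·ln(1 + exp(−v)) + max{0, W_n·ln(1 + exp(v))} attains its minimum over ℝ at v = ln(W_p/W_n), and the minimum value equals (W_p + W_n)·(−v*·ln v* − (1−v*)·ln(1−v*)). (Proposition 2(b), case 0 < v* < 1: closed form of the minimum nnPU partial empirical risk under the logistic loss.) -/

import Mathlib

/-!
Writing `σ` for the logistic sigmoid and `p = W_p / (W_p + W_n)`, the objective is
`(W_p + W_n)` times the binary cross-entropy of the prediction `σ v` against the label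
distribution `p`: the `max` is inactive because `ln (1 + exp v) ≥ 0`, and
`ln σ v = -ln (1 + exp (-v))`, `ln (1 - σ v) = -ln (1 + exp v)`. By Gibbs' inequality the
cross-entropy is minimal, with value the binary entropy of `p`, at `σ v = p`, that is at
`v = ln (W_p / W_n)`.
-/

open Real

noncomputable def binCrossEntropy (p x : ℝ) : ℝ := -p * log x - (1 - p) * log (1 - x)

lemma mul_log_le_mul_log_add_sub {a y : ℝ} (ha : 0 ≤ a) (hy : 0 < y) :
    a * log y ≤ a * log a + (y - a) := by
  rcases ha.eq_or_lt with rfl | ha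
  · simpa using hy.le
  have h := log_le_sub_one_of_pos (div_pos hy ha)
  rw [log_div hy.ne' ha.ne'] at h
  have e : a * (y / a - 1) = y - a := by field_simp
  nlinarith [mul_le_mul_of_nonneg_left h ha.le]

lemma binCrossEntropy_self_le {p x : ℝ} (hp₀ : 0 ≤ p) (hp₁ : p ≤ 1)
    (hx₀ : 0 < x) (hx₁ : x < 1) :
    binCrossEntropy p p ≤ binCrossEntropy p x := by
  have h₀ := mul_log_le_mul_log_add_sub hp₀ hx₀
  have h₁ := mul_log_le_mul_log_add_sub (sub_nonneg.2 hp₁) (sub_pos.2 hx₁)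
  unfold binCrossEntropy
  linarith

lemma log_sigmoid (u : ℝ) : log (sigmoid u) = -log (1 + exp (-u)) := by
  rw [sigmoid_def, log_inv]

lemma log_one_sub_sigmoid (u : ℝ) : log (1 - sigmoid u) = -log (1 + exp u) := by
  rw [← sigmoid_neg, log_sigmoid, neg_neg]

lemma sigmoid_log_div {a b : ℝ} (ha : 0 < a) (hb : 0 < b) :
    sigmoid (log (a / b)) = a / (a + b) := by
  rw [sigmoid_def, ← log_inv, inv_div, exp_log (div_pos hb ha)]
  field_simp

lemma mul_binCrossEntropy_sigmoid {a b : ℝ} (hab : a + b ≠ 0) (u : ℝ) :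
    (a + b) * binCrossEntropy (a / (a + b)) (sigmoid u) =
      a * log (1 + exp (-u)) + b * log (1 + exp u) := by
  rw [binCrossEntropy, log_sigmoid, log_one_sub_sigmoid]
  field_simp
  ring

/-- Proposition 2(b), case `0 < v* < 1`: the nnPU logistic objective
`g v = Wp*ln(1+exp(-v)) + max{0, Wn*ln(1+exp v)}`, with `Wp, Wn > 0`, attains its
minimum at `v = ln(Wp/Wn)`, with minimum value
`(Wp+Wn)(-v* ln v* - (1-v*) ln(1-v*))`, `v* = Wp/(Wp+Wn)`. -/
theorem nnPU_logistic_min (Wp Wn : ℝ) (hWp : 0 < Wp) (hWn : 0 < Wn) :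
    (∀ u : ℝ,
        Wp * Real.log (1 + Real.exp (-Real.log (Wp / Wn)))
            + max 0 (Wn * Real.log (1 + Real.exp (Real.log (Wp / Wn)))) ≤
          Wp * Real.log (1 + Real.exp (-u)) + max 0 (Wn * Real.log (1 + Real.exp u))) ∧
    Wp * Real.log (1 + Real.exp (-Real.log (Wp / Wn)))
        + max 0 (Wn * Real.log (1 + Real.exp (Real.log (Wp / Wn)))) =
      (Wp + Wn) * (-(Wp / (Wp + Wn)) * Real.log (Wp / (Wp + Wn))
        - (1 - Wp / (Wp + Wn)) * Real.log (1 - Wp / (Wp + Wn))) := by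
  have hS : 0 < Wp + Wn := add_pos hWp hWn
  have hg : ∀ u : ℝ, Wp * log (1 + exp (-u)) + max 0 (Wn * log (1 + exp u)) =
      (Wp + Wn) * binCrossEntropy (Wp / (Wp + Wn)) (sigmoid u) := fun u => by
    have hlog : 0 ≤ log (1 + exp u) := log_nonneg (le_add_of_nonneg_right (exp_nonneg u))
    rw [max_eq_right (mul_nonneg hWn.le hlog), mul_binCrossEntropy_sigmoid hS.ne']
  have hp : 0 ≤ Wp / (Wp + Wn) ∧ Wp / (Wp + Wn) ≤ 1 :=
    ⟨by positivity, (div_le_one hS).2 (by linarith)⟩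
  rw [hg, sigmoid_log_div hWp hWn]
  refine ⟨fun u => ?_, rfl⟩
  rw [hg]
  exact mul_le_mul_of_nonneg_left
    (binCrossEntropy_self_le hp.1 hp.2 (sigmoid_pos u) (sigmoid_lt_one u)) hS.le
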